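/- arXiv:1410.2588 — 2 statements merged into one kernel-verified Lean document; each statement's English description precedes it below -/
import Mathlib

section
/- Let p ∈ (1,∞] and τ > 0. Let (λ_n)_{n≥0} be real numbers for which there exist C₀ > 0 and N ∈ ℕ with λ_n ≥ C₀ n for all n ≥ N; let (c_n)_{n≥0} satisfy Σ_{n≥0} |c_n|² < ∞; let (ζ_n)_{n≥0} satisfy |ζ_n| ≤ C (1 + |λ_n|^{3/2}) for all n, for some C > 0; and let g_i : [0,1] → ℝ satisfy sup_{x∈[0,1]} |g_i(x)| ≤ C' / (R^i (i!)^{2 − 1/p}) for all i ≥ 0, for some C', R > 0 (with 1/p = 0 if p = ∞). Then for every x ∈ [0,1] the double family (c_n ζ_n e^{−λ_n τ} (−λ_n)^i g_i(x))_{i,n≥0} is absolutely summable, and Σ_{n≥0} c_n ζ_n e^{−λ_n τ} (Σ_{i≥0} (−λ_n)^i g_i(x)) = Σ_{i≥0} (Σ_{n≥0} c_n ζ_n e^{−λ_n τ} (−λ_n)^i) g_i(x). -/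
set_option maxHeartbeats 1000000


open MeasureTheory Set Filter Topology

private lemma aux_pow_le (s M : ℝ) (hs : 0 < s) (hM : 0 < M) :
    ∃ K : ℝ, 0 ≤ K ∧ ∀ i : ℕ, M ^ i ≤ K * (Nat.factorial i : ℝ) ^ s := by
  set A : ℝ := M ^ s⁻¹ with hA
  have hA0 : 0 < A := Real.rpow_pos_of_pos hM _
  have hsum := Real.summable_pow_div_factorial A
  set T : ℝ := ∑' i : ℕ, A ^ i / (Nat.factorial i : ℝ) with hT
  have hTle : ∀ i : ℕ, A ^ i / (Nat.factorial i : ℝ) ≤ T :=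
    fun i => Summable.le_tsum hsum i (fun j _ => by positivity)
  have hT0 : 0 ≤ T := le_trans (by positivity) (hTle 0)
  refine ⟨T ^ s, by positivity, fun i => ?_⟩
  have hfac : (0 : ℝ) < (Nat.factorial i : ℝ) := by
    exact_mod_cast Nat.factorial_pos i
  have h1 : A ^ i ≤ T * (Nat.factorial i : ℝ) := by
    have := hTle i
    rw [div_le_iff₀ hfac] at this
    linarith
  have h2 : ((A : ℝ) ^ i) ^ s ≤ (T * (Nat.factorial i : ℝ)) ^ s :=
    Real.rpow_le_rpow (by positivity) h1 hs.le
  have h3 : ((A : ℝ) ^ i) ^ s = M ^ i := by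
    rw [← Real.rpow_natCast A i, hA, ← Real.rpow_mul hM.le, ← Real.rpow_mul hM.le]
    rw [show s⁻¹ * (i : ℝ) * s = (i : ℝ) by field_simp, Real.rpow_natCast]
  have h4 : (T * (Nat.factorial i : ℝ)) ^ s = T ^ s * (Nat.factorial i : ℝ) ^ s :=
    Real.mul_rpow hT0 hfac.le
  calc M ^ i = ((A : ℝ) ^ i) ^ s := h3.symm
    _ ≤ (T * (Nat.factorial i : ℝ)) ^ s := h2
    _ = T ^ s * (Nat.factorial i : ℝ) ^ s := h4

private lemma aux_poly_le (τ : ℝ) (hτ : 0 < τ) :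
    ∃ K : ℝ, 0 ≤ K ∧ ∀ l : ℝ, 0 ≤ l →
      1 + l ^ ((3 : ℝ) / 2) ≤ K * Real.exp (l * (τ / 4)) := by
  refine ⟨2 + 64 / τ ^ 2, by positivity, fun l hl => ?_⟩
  have h1 : l ^ ((3 : ℝ) / 2) ≤ 1 + l ^ 2 := by
    rcases le_total l 1 with h | h
    · have := Real.rpow_le_one hl h (by norm_num : (0:ℝ) ≤ 3 / 2)
      nlinarith [sq_nonneg l]
    · have h2 : l ^ ((3 : ℝ) / 2) ≤ l ^ ((2 : ℝ)) :=
        Real.rpow_le_rpow_of_exponent_le h (by norm_num)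
      rw [Real.rpow_two] at h2
      nlinarith
  have he : l * (τ / 8) + 1 ≤ Real.exp (l * (τ / 8)) := Real.add_one_le_exp _
  have hexp2 : Real.exp (l * (τ / 8)) ^ 2 = Real.exp (l * (τ / 4)) := by
    rw [sq, ← Real.exp_add]; ring_nf
  have hpos : 0 ≤ l * (τ / 8) := by positivity
  have h3 : (l * (τ / 8)) ^ 2 ≤ Real.exp (l * (τ / 4)) := by
    nlinarith [Real.exp_pos (l * (τ / 8))]
  have h4 : l ^ 2 ≤ 64 / τ ^ 2 * Real.exp (l * (τ / 4)) := by
    have hτ2 : (0 : ℝ) < τ ^ 2 := by positivity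
    rw [div_mul_eq_mul_div, le_div_iff₀ hτ2]
    nlinarith
  have h5 : 1 ≤ Real.exp (l * (τ / 4)) := Real.one_le_exp (by positivity)
  nlinarith

/- STATEMENT 16 (Fubini for the double series at t = τ): under the stated bounds on λ_n, c_n,
ζ_n and on the generating functions g_i, for each x ∈ [0,1] the doubly indexed family
(c_n ζ_n e^{−λ_n τ} (−λ_n)^i g_i(x))_{i,n} is (absolutely) summable and the two iterated sums
agree. (In ℝ, Summable is equivalent to absolute summability.) 1/p is interpreted as 0 for
p = ∞ via p.toReal⁻¹. -/
theorem stmt_16 (p : ENNReal) (hp : 1 < p) (τ : ℝ) (hτ : 0 < τ)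
    (lam : ℕ → ℝ) (C₀ : ℝ) (hC₀ : 0 < C₀) (N : ℕ) (hlin : ∀ n : ℕ, N ≤ n → C₀ * n ≤ lam n)
    (c ζ : ℕ → ℝ) (hc : Summable fun n => |c n| ^ 2)
    (C : ℝ) (hC : 0 < C) (hζ : ∀ n : ℕ, |ζ n| ≤ C * (1 + |lam n| ^ ((3:ℝ) / 2)))
    (g : ℕ → ℝ → ℝ) (C' R : ℝ) (hC' : 0 < C') (hR : 0 < R)
    (hg : ∀ i : ℕ, ∀ x ∈ Icc (0:ℝ) 1,
      |g i x| ≤ C' / (R ^ i * (Nat.factorial i : ℝ) ^ (2 - p.toReal⁻¹))) :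
    ∀ x ∈ Icc (0:ℝ) 1,
      Summable (fun q : ℕ × ℕ =>
        c q.2 * ζ q.2 * Real.exp (-(lam q.2) * τ) * (-(lam q.2)) ^ q.1 * g q.1 x) ∧
      (∑' n : ℕ, c n * ζ n * Real.exp (-(lam n) * τ) * (∑' i : ℕ, (-(lam n)) ^ i * g i x))
        = ∑' i : ℕ, (∑' n : ℕ, c n * ζ n * Real.exp (-(lam n) * τ) * (-(lam n)) ^ i) * g i x := by
  intro x hx
  set s : ℝ := 2 - p.toReal⁻¹ with hsdef
  have hs : 1 < s := by
    rw [hsdef]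
    rcases eq_or_ne p ⊤ with h | h
    · simp [h]
    · have h1 : 1 < p.toReal := by
        rw [← ENNReal.toReal_one]
        exact (ENNReal.toReal_lt_toReal (by simp) h).mpr hp
      have h2 : p.toReal⁻¹ < 1 := by
        rw [inv_lt_one_iff₀]
        right; exact h1
      linarith
  obtain ⟨K₁, hK₁0, hK₁⟩ := aux_pow_le (s - 1) (4 / (R * τ)) (by linarith) (by positivity)
  obtain ⟨K₂, hK₂0, hK₂⟩ := aux_poly_le τ hτ
  -- the pointwise bound
  have step : ∀ (l : ℝ) (i : ℕ), 0 ≤ l →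
      l ^ i * (C' / (R ^ i * (Nat.factorial i : ℝ) ^ s)) ≤
        C' * K₁ * ((l * (τ / 4)) ^ i / (Nat.factorial i : ℝ)) := by
    intro l i hl
    have hfac : (0 : ℝ) < (Nat.factorial i : ℝ) := by exact_mod_cast Nat.factorial_pos i
    have hfs : (0 : ℝ) < (Nat.factorial i : ℝ) ^ s := Real.rpow_pos_of_pos hfac s
    have e1 : (Nat.factorial i : ℝ) ^ s
        = (Nat.factorial i : ℝ) ^ (s - 1) * (Nat.factorial i : ℝ) := by
      calc (Nat.factorial i : ℝ) ^ s = (Nat.factorial i : ℝ) ^ (s - 1 + 1) := by ring_nf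
        _ = (Nat.factorial i : ℝ) ^ (s - 1) * (Nat.factorial i : ℝ) ^ (1 : ℝ) :=
            Real.rpow_add hfac _ _
        _ = (Nat.factorial i : ℝ) ^ (s - 1) * (Nat.factorial i : ℝ) := by rw [Real.rpow_one]
    have e2 : ((4 / (R * τ) : ℝ)) ^ i * ((R * (τ / 4) : ℝ)) ^ i = 1 := by
      rw [← mul_pow, show (4 / (R * τ) : ℝ) * (R * (τ / 4)) = 1 by
        field_simp]
      exact one_pow i
    have h2 : (Nat.factorial i : ℝ) ≤ K₁ * (R * (τ / 4)) ^ i * (Nat.factorial i : ℝ) ^ s := by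
      have h3 := mul_le_mul_of_nonneg_right (hK₁ i)
        (show (0 : ℝ) ≤ (R * (τ / 4)) ^ i * (Nat.factorial i : ℝ) by positivity)
      calc (Nat.factorial i : ℝ)
          = (4 / (R * τ)) ^ i * ((R * (τ / 4)) ^ i * (Nat.factorial i : ℝ)) := by
            rw [← mul_assoc, e2, one_mul]
        _ ≤ K₁ * (Nat.factorial i : ℝ) ^ (s - 1) * ((R * (τ / 4)) ^ i * (Nat.factorial i : ℝ)) :=
            h3
        _ = K₁ * (R * (τ / 4)) ^ i *
              ((Nat.factorial i : ℝ) ^ (s - 1) * (Nat.factorial i : ℝ)) := by ring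
        _ = K₁ * (R * (τ / 4)) ^ i * (Nat.factorial i : ℝ) ^ s := by rw [← e1]
    have hXY : C' / (R ^ i * (Nat.factorial i : ℝ) ^ s)
        ≤ C' * K₁ * (τ / 4) ^ i / (Nat.factorial i : ℝ) := by
      rw [div_le_div_iff₀ (by positivity) hfac]
      calc C' * (Nat.factorial i : ℝ)
          ≤ C' * (K₁ * (R * (τ / 4)) ^ i * (Nat.factorial i : ℝ) ^ s) :=
            mul_le_mul_of_nonneg_left h2 hC'.le
        _ = C' * K₁ * (τ / 4) ^ i * (R ^ i * (Nat.factorial i : ℝ) ^ s) := by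
            rw [mul_pow]; ring
    calc l ^ i * (C' / (R ^ i * (Nat.factorial i : ℝ) ^ s))
        ≤ l ^ i * (C' * K₁ * (τ / 4) ^ i / (Nat.factorial i : ℝ)) :=
          mul_le_mul_of_nonneg_left hXY (pow_nonneg hl i)
      _ = C' * K₁ * ((l * (τ / 4)) ^ i / (Nat.factorial i : ℝ)) := by rw [mul_pow]; ring
  have key : ∀ (i n : ℕ),
      |c n * ζ n * Real.exp (-(lam n) * τ) * (-(lam n)) ^ i * g i x|
        ≤ C' * K₁ * (|c n| * |ζ n| * Real.exp (-(lam n) * τ))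
            * ((|lam n| * (τ / 4)) ^ i / (Nat.factorial i : ℝ)) := by
    intro i n
    have h0 : |c n * ζ n * Real.exp (-(lam n) * τ) * (-(lam n)) ^ i * g i x|
        = |c n| * |ζ n| * Real.exp (-(lam n) * τ) * |lam n| ^ i * |g i x| := by
      simp only [abs_mul, abs_pow, abs_neg, Real.abs_exp]
    rw [h0]
    calc |c n| * |ζ n| * Real.exp (-(lam n) * τ) * |lam n| ^ i * |g i x|
        ≤ |c n| * |ζ n| * Real.exp (-(lam n) * τ) * |lam n| ^ i
            * (C' / (R ^ i * (Nat.factorial i : ℝ) ^ s)) := by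
          gcongr
          · exact hg i x hx
      _ = (|c n| * |ζ n| * Real.exp (-(lam n) * τ))
            * (|lam n| ^ i * (C' / (R ^ i * (Nat.factorial i : ℝ) ^ s))) := by ring
      _ ≤ (|c n| * |ζ n| * Real.exp (-(lam n) * τ))
            * (C' * K₁ * ((|lam n| * (τ / 4)) ^ i / (Nat.factorial i : ℝ))) :=
          mul_le_mul_of_nonneg_left (step _ i (abs_nonneg _)) (by positivity)
      _ = C' * K₁ * (|c n| * |ζ n| * Real.exp (-(lam n) * τ))
            * ((|lam n| * (τ / 4)) ^ i / (Nat.factorial i : ℝ)) := by ring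
  -- summability in i for fixed n
  have hsumI : ∀ n : ℕ, Summable (fun i : ℕ =>
      |c n * ζ n * Real.exp (-(lam n) * τ) * (-(lam n)) ^ i * g i x|) := by
    intro n
    apply Summable.of_nonneg_of_le (fun i => abs_nonneg _) (fun i => key i n)
    exact (Real.summable_pow_div_factorial (|lam n| * (τ / 4))).mul_left _
  have hexp : ∀ y : ℝ, ∑' i : ℕ, y ^ i / (Nat.factorial i : ℝ) = Real.exp y := by
    intro y
    rw [Real.exp_eq_exp_ℝ, NormedSpace.exp_eq_tsum_div]
  have htsumI : ∀ n : ℕ,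
      (∑' i : ℕ, |c n * ζ n * Real.exp (-(lam n) * τ) * (-(lam n)) ^ i * g i x|)
        ≤ C' * K₁ * (|c n| * |ζ n| * Real.exp (-(lam n) * τ))
            * Real.exp (|lam n| * (τ / 4)) := by
    intro n
    have h1 := Summable.tsum_le_tsum (fun i => key i n) (hsumI n)
      ((Real.summable_pow_div_factorial (|lam n| * (τ / 4))).mul_left _)
    rw [tsum_mul_left, hexp] at h1
    exact h1
  -- summability of the majorant over n
  set r : ℝ := Real.exp (-(C₀ * (τ / 2))) with hrdef
  have hr0 : 0 < r := Real.exp_pos _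
  have hr1 : r < 1 := by
    rw [hrdef, Real.exp_lt_one_iff]
    nlinarith
  have hb : Summable (fun n : ℕ =>
      C' * K₁ * (|c n| * |ζ n| * Real.exp (-(lam n) * τ)) * Real.exp (|lam n| * (τ / 4))) := by
    rw [← summable_nat_add_iff N]
    have hmaj : Summable (fun m : ℕ =>
        C' * K₁ * C * K₂ * ((|c (m + N)| ^ 2 + (r ^ 2) ^ (m + N)) / 2)) := by
      apply Summable.mul_left
      apply Summable.div_const
      apply Summable.add
      · exact (summable_nat_add_iff N).mpr hc
      · exact (summable_nat_add_iff N).mpr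
          (summable_geometric_of_lt_one (by positivity) (by nlinarith))
    apply Summable.of_nonneg_of_le (fun m => by positivity) ?_ hmaj
    intro m
    set n : ℕ := m + N with hn
    have hN' : N ≤ n := Nat.le_add_left N m
    have hlam0 : 0 ≤ lam n := le_trans (by positivity) (hlin n hN')
    have habs : |lam n| = lam n := abs_of_nonneg hlam0
    have hz := hζ n
    rw [habs] at hz ⊢
    have hr2 : (r ^ 2) ^ n = (r ^ n) ^ 2 := by rw [← pow_mul, ← pow_mul, mul_comm]
    calc C' * K₁ * (|c n| * |ζ n| * Real.exp (-(lam n) * τ)) * Real.exp (lam n * (τ / 4))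
        ≤ C' * K₁ * (|c n| * (C * (K₂ * Real.exp (lam n * (τ / 4)))) * Real.exp (-(lam n) * τ))
            * Real.exp (lam n * (τ / 4)) := by
          gcongr
          calc |ζ n| ≤ C * (1 + lam n ^ ((3:ℝ) / 2)) := hz
            _ ≤ C * (K₂ * Real.exp (lam n * (τ / 4))) :=
              mul_le_mul_of_nonneg_left (hK₂ (lam n) hlam0) hC.le
      _ = C' * K₁ * C * K₂ * |c n|
            * Real.exp (-(lam n) * τ + lam n * (τ / 4) + lam n * (τ / 4)) := by
          rw [Real.exp_add, Real.exp_add]; ring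
      _ ≤ C' * K₁ * C * K₂ * |c n| * Real.exp ((n : ℝ) * (-(C₀ * (τ / 2)))) :=
          mul_le_mul_of_nonneg_left
            (Real.exp_le_exp.mpr (by nlinarith [hlin n hN', (Nat.cast_nonneg n : (0:ℝ) ≤ (n:ℝ))]))
            (by positivity)
      _ = C' * K₁ * C * K₂ * (|c n| * r ^ n) := by
          rw [hrdef, Real.exp_nat_mul]; ring
      _ ≤ C' * K₁ * C * K₂ * ((|c n| ^ 2 + (r ^ 2) ^ n) / 2) := by
          apply mul_le_mul_of_nonneg_left _ (by positivity)
          rw [hr2]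
          nlinarith [sq_nonneg (|c n| - r ^ n)]
  -- absolute summability of the double family
  have hswap : Summable (fun q : ℕ × ℕ =>
      |c q.1 * ζ q.1 * Real.exp (-(lam q.1) * τ) * (-(lam q.1)) ^ q.2 * g q.2 x|) := by
    apply (summable_prod_of_nonneg (fun _ => abs_nonneg _)).mpr
    refine ⟨fun n => hsumI n, ?_⟩
    apply Summable.of_nonneg_of_le (fun n => tsum_nonneg fun i => abs_nonneg _) htsumI hb
  have hABS : Summable (fun q : ℕ × ℕ =>
      |c q.2 * ζ q.2 * Real.exp (-(lam q.2) * τ) * (-(lam q.2)) ^ q.1 * g q.1 x|) :=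
    hswap.prod_symm
  have hsum : Summable (fun q : ℕ × ℕ =>
      c q.2 * ζ q.2 * Real.exp (-(lam q.2) * τ) * (-(lam q.2)) ^ q.1 * g q.1 x) :=
    summable_abs_iff.mp hABS
  refine ⟨hsum, ?_⟩
  have hunc : Summable (Function.uncurry fun (i n : ℕ) =>
      c n * ζ n * Real.exp (-(lam n) * τ) * ((-(lam n)) ^ i * g i x)) :=
    hsum.congr (fun q => by simp [Function.uncurry]; ring)
  calc (∑' n : ℕ, c n * ζ n * Real.exp (-(lam n) * τ) * (∑' i : ℕ, (-(lam n)) ^ i * g i x))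
      = ∑' (n : ℕ) (i : ℕ),
          c n * ζ n * Real.exp (-(lam n) * τ) * ((-(lam n)) ^ i * g i x) :=
        tsum_congr fun n => (tsum_mul_left).symm
    _ = ∑' (i : ℕ) (n : ℕ),
          c n * ζ n * Real.exp (-(lam n) * τ) * ((-(lam n)) ^ i * g i x) :=
        Summable.tsum_comm hunc
    _ = ∑' i : ℕ, (∑' n : ℕ, c n * ζ n * Real.exp (-(lam n) * τ) * (-(lam n)) ^ i) * g i x := by
        refine tsum_congr fun i => ?_
        rw [← tsum_mul_right]
        exact tsum_congr fun n => by ring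
end

section
/- Let p ∈ (1,∞], let s ∈ (1, 2 − 1/p) (with 1/p = 0 if p = ∞), and let τ < T. Let y ∈ G^s([τ,T]) with constants M, δ > 0, i.e., |y^{(i)}(t)| ≤ M (i!)^s / δ^i for all t ∈ [τ,T] and i ≥ 0, and let g_i ∈ W^{2,p}(0,1) satisfy ‖g_i‖_{W^{2,p}(0,1)} ≤ C / (R^i (i!)^{2−1/p}) for all i ≥ 0, for some C, R > 0. Then for each t ∈ [τ,T] the series u(t) = Σ_{i≥0} y^{(i)}(t) g_i converges absolutely in W^{2,p}(0,1), the map t ↦ u(t) is infinitely differentiable from [τ,T] to W^{2,p}(0,1) with ∂_t^j u(t) = Σ_{i≥0} y^{(i+j)}(t) g_i, and for all j ≥ 0 and t ∈ [τ,T]: ‖∂_t^j u(t)‖_{W^{2,p}(0,1)} ≤ C M (2^s/δ)^j (Σ_{i≥0} (2^s/(δR))^i / (i!)^{2 − 1/p − s}) (j!)^s, where the series in the bound is finite; in particular u ∈ G^s([τ,T], W^{2,p}(0,1)). -/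
open MeasureTheory Set Filter Topology

lemma aux_fact_nat (i j : ℕ) : (i+j).factorial ≤ 2^(i+j) * i.factorial * j.factorial := by
  have h := Nat.choose_mul_factorial_mul_factorial (Nat.le_add_right i j)
  have hj : i + j - i = j := by omega
  rw [hj] at h
  have hc : (i+j).choose i ≤ 2^(i+j) := by
    calc (i+j).choose i ≤ ∑ m ∈ Finset.range (i+j+1), (i+j).choose m :=
          Finset.single_le_sum (fun m _ => Nat.zero_le _) (Finset.mem_range.2 (by omega))
      _ = 2^(i+j) := Nat.sum_range_choose _
  calc (i+j).factorial = (i+j).choose i * i.factorial * j.factorial := h.symm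
    _ ≤ 2^(i+j) * i.factorial * j.factorial := by
        exact Nat.mul_le_mul_right _ (Nat.mul_le_mul_right _ hc)

lemma aux_fact_real (i j : ℕ) : ((i+j).factorial : ℝ) ≤ 2^(i+j) * i.factorial * j.factorial := by
  exact_mod_cast aux_fact_nat i j

lemma aux_rpow (s : ℝ) (hs : 0 ≤ s) (i j : ℕ) :
    ((i+j).factorial:ℝ)^s ≤ ((2:ℝ)^s)^(i+j) * (i.factorial:ℝ)^s * (j.factorial:ℝ)^s := by
  have h1 : ((i+j).factorial:ℝ)^s ≤ ((2:ℝ)^(i+j) * i.factorial * j.factorial)^s :=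
    Real.rpow_le_rpow (by positivity) (aux_fact_real i j) hs
  have h2 : ((2:ℝ)^(i+j) * (i.factorial:ℝ) * (j.factorial:ℝ))^s
      = ((2:ℝ)^s)^(i+j) * (i.factorial:ℝ)^s * (j.factorial:ℝ)^s := by
    rw [Real.mul_rpow (by positivity) (by positivity), Real.mul_rpow (by positivity) (by positivity)]
    congr 1
    congr 1
    rw [← Real.rpow_natCast (2:ℝ) (i+j), ← Real.rpow_natCast ((2:ℝ)^s) (i+j),
      ← Real.rpow_mul (by norm_num), ← Real.rpow_mul (by norm_num), mul_comm]
  rw [h2] at h1; exact h1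

lemma aux_summable {x r : ℝ} (hx : 0 < x) (hr : 0 < r) :
    Summable (fun i : ℕ => x^i / (i.factorial:ℝ)^r) := by
  apply summable_of_ratio_test_tendsto_lt_one (l := 0) one_pos
  · filter_upwards with n
    have : 0 < x^n / (n.factorial:ℝ)^r := by
      apply div_pos (pow_pos hx n)
      exact Real.rpow_pos_of_pos (by exact_mod_cast n.factorial_pos) r
    exact ne_of_gt this
  · have key : ∀ n : ℕ, ‖x^(n+1) / ((n+1).factorial:ℝ)^r‖ / ‖x^n / (n.factorial:ℝ)^r‖
        = x / ((n:ℝ)+1)^r := by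
      intro n
      have hf : (0:ℝ) < (n.factorial:ℝ) := by exact_mod_cast n.factorial_pos
      have hfr : (0:ℝ) < (n.factorial:ℝ)^r := Real.rpow_pos_of_pos hf r
      have hn1 : (0:ℝ) < ((n:ℝ)+1) := by positivity
      have hn1r : (0:ℝ) < ((n:ℝ)+1)^r := Real.rpow_pos_of_pos hn1 r
      have hfact : (((n+1).factorial:ℝ))^r = ((n:ℝ)+1)^r * (n.factorial:ℝ)^r := by
        rw [Nat.factorial_succ]
        push_cast
        rw [Real.mul_rpow (by positivity) (by positivity)]
      rw [Real.norm_eq_abs, Real.norm_eq_abs, abs_of_pos (by positivity), abs_of_pos (by positivity),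
        hfact, pow_succ]
      field_simp
    simp only [key]
    apply Tendsto.div_atTop tendsto_const_nhds
    exact (tendsto_rpow_atTop hr).comp
      (tendsto_atTop_add_const_right atTop 1 tendsto_natCast_atTop_atTop)

lemma aux_ineq (s q C M δ R : ℝ) (hs : 0 ≤ s) (hC : 0 ≤ C) (hM : 0 ≤ M) (hδ : 0 < δ)
    (hR : 0 < R) (i j : ℕ) :
    M * ((i+j).factorial:ℝ)^s / δ^(i+j) * (C / (R^i * (i.factorial:ℝ)^q))
      ≤ C * M * ((2:ℝ)^s/δ)^j * ((j.factorial:ℝ))^s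
        * (((2:ℝ)^s/(δ*R))^i / (i.factorial:ℝ)^(q - s)) := by
  have hA : (0:ℝ) < (2:ℝ)^s := Real.rpow_pos_of_pos two_pos s
  have hF : (0:ℝ) < (i.factorial:ℝ) := by exact_mod_cast i.factorial_pos
  have hFs : (0:ℝ) < (i.factorial:ℝ)^s := Real.rpow_pos_of_pos hF s
  have hFq : (0:ℝ) < (i.factorial:ℝ)^q := Real.rpow_pos_of_pos hF q
  have hJs : (0:ℝ) < (j.factorial:ℝ)^s := Real.rpow_pos_of_pos (by exact_mod_cast j.factorial_pos) s
  calc M * ((i+j).factorial:ℝ)^s / δ^(i+j) * (C / (R^i * (i.factorial:ℝ)^q))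
      ≤ M * (((2:ℝ)^s)^(i+j) * (i.factorial:ℝ)^s * (j.factorial:ℝ)^s) / δ^(i+j)
          * (C / (R^i * (i.factorial:ℝ)^q)) := by
        gcongr
        exact aux_rpow s hs i j
    _ = C * M * ((2:ℝ)^s/δ)^j * ((j.factorial:ℝ))^s
        * (((2:ℝ)^s/(δ*R))^i / (i.factorial:ℝ)^(q - s)) := by
        rw [Real.rpow_sub hF, pow_add, pow_add, div_pow, div_pow, mul_pow]
        field_simp

theorem stmt_17 (p : ENNReal) (hp : 1 < p)
    (s : ℝ) (hs1 : 1 < s) (hs2 : s < 2 - p.toReal⁻¹)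
    (τ T : ℝ) (hτT : τ < T)
    (B : Type*) [NormedAddCommGroup B] [NormedSpace ℝ B] [CompleteSpace B]
    (y : ℝ → ℝ) (M δ : ℝ) (hM : 0 < M) (hδ : 0 < δ)
    (hy : ContDiffOn ℝ (⊤ : ℕ∞) y (Icc τ T))
    (hybound : ∀ i : ℕ, ∀ t ∈ Icc τ T,
      |iteratedDerivWithin i y (Icc τ T) t| ≤ M * (Nat.factorial i : ℝ) ^ s / δ ^ i)
    (g : ℕ → B) (C R : ℝ) (hC : 0 < C) (hR : 0 < R)
    (hg : ∀ i : ℕ, ‖g i‖ ≤ C / (R ^ i * (Nat.factorial i : ℝ) ^ (2 - p.toReal⁻¹))) :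
    (∀ t ∈ Icc τ T,
      Summable fun i : ℕ => ‖(iteratedDerivWithin i y (Icc τ T) t) • g i‖) ∧
    ContDiffOn ℝ (⊤ : ℕ∞)
      (fun t : ℝ => ∑' i : ℕ, (iteratedDerivWithin i y (Icc τ T) t) • g i) (Icc τ T) ∧
    (∀ j : ℕ, ∀ t ∈ Icc τ T,
      iteratedDerivWithin j
          (fun t : ℝ => ∑' i : ℕ, (iteratedDerivWithin i y (Icc τ T) t) • g i) (Icc τ T) t
        = ∑' i : ℕ, (iteratedDerivWithin (i + j) y (Icc τ T) t) • g i) ∧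
    Summable (fun i : ℕ =>
      ((2:ℝ) ^ s / (δ * R)) ^ i / (Nat.factorial i : ℝ) ^ (2 - p.toReal⁻¹ - s)) ∧
    (∀ j : ℕ, ∀ t ∈ Icc τ T,
      ‖iteratedDerivWithin j
          (fun t : ℝ => ∑' i : ℕ, (iteratedDerivWithin i y (Icc τ T) t) • g i) (Icc τ T) t‖
        ≤ C * M * ((2:ℝ) ^ s / δ) ^ j
            * (∑' i : ℕ, ((2:ℝ) ^ s / (δ * R)) ^ i / (Nat.factorial i : ℝ) ^ (2 - p.toReal⁻¹ - s))
            * (Nat.factorial j : ℝ) ^ s) := by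
  have hUD : UniqueDiffOn ℝ (Icc τ T) := uniqueDiffOn_Icc hτT
  have hs0 : (0:ℝ) ≤ s := le_of_lt (lt_trans one_pos hs1)
  have hqs : (0:ℝ) < 2 - p.toReal⁻¹ - s := sub_pos.2 hs2
  have hA : (0:ℝ) < (2:ℝ)^s := Real.rpow_pos_of_pos two_pos s
  set e : ℕ → ℝ :=
    fun i : ℕ => ((2:ℝ) ^ s / (δ * R)) ^ i / (Nat.factorial i : ℝ) ^ (2 - p.toReal⁻¹ - s)
    with he
  have hesum : Summable e := aux_summable (div_pos hA (mul_pos hδ hR)) hqs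
  have hepos : ∀ i, 0 < e i := fun i => div_pos (pow_pos (div_pos hA (mul_pos hδ hR)) i)
    (Real.rpow_pos_of_pos (by exact_mod_cast (Nat.factorial_pos i)) _)
  set Q : ℝ := ∑' i, e i with hQ
  have hQpos : 0 < Q := lt_of_lt_of_le (hepos 0)
    (Summable.le_tsum hesum 0 (fun b _ => (hepos b).le))
  -- term bound
  have hterm : ∀ (j i : ℕ), ∀ t ∈ Icc τ T,
      ‖iteratedDerivWithin (i+j) y (Icc τ T) t • g i‖
        ≤ C * M * ((2:ℝ)^s/δ)^j * (Nat.factorial j : ℝ)^s * e i := by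
    intro j i t ht
    rw [norm_smul, Real.norm_eq_abs]
    calc |iteratedDerivWithin (i+j) y (Icc τ T) t| * ‖g i‖
        ≤ (M * ((i+j).factorial:ℝ)^s / δ^(i+j)) * (C / (R^i * (Nat.factorial i:ℝ)^(2 - p.toReal⁻¹)))
          := mul_le_mul (hybound (i+j) t ht) (hg i) (norm_nonneg _) (by positivity)
      _ ≤ _ := aux_ineq s (2 - p.toReal⁻¹) C M δ R hs0 hC.le hM.le hδ hR i j
  have hnormsum : ∀ (j : ℕ), ∀ t ∈ Icc τ T,
      Summable (fun i => ‖iteratedDerivWithin (i+j) y (Icc τ T) t • g i‖) := by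
    intro j t ht
    exact Summable.of_nonneg_of_le (fun i => norm_nonneg _) (fun i => hterm j i t ht)
      (hesum.mul_left _)
  have hsum : ∀ (j : ℕ), ∀ t ∈ Icc τ T,
      Summable (fun i => iteratedDerivWithin (i+j) y (Icc τ T) t • g i) :=
    fun j t ht => (hnormsum j t ht).of_norm
  set S : ℕ → ℝ → B := fun j t => ∑' i, iteratedDerivWithin (i+j) y (Icc τ T) t • g i with hS
  -- derivatives of iterated derivatives of y
  have hderiv : ∀ (i : ℕ), ∀ t ∈ Icc τ T,
      HasDerivWithinAt (iteratedDerivWithin i y (Icc τ T))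
        (iteratedDerivWithin (i+1) y (Icc τ T) t) (Icc τ T) t := by
    intro i t ht
    have hdo : DifferentiableOn ℝ (iteratedDerivWithin i y (Icc τ T)) (Icc τ T) :=
      hy.differentiableOn_iteratedDerivWithin (by exact_mod_cast lt_top_iff_ne_top.2 (by simp)) hUD
    have h1 := (hdo t ht).hasDerivWithinAt
    rwa [← iteratedDerivWithin_succ] at h1
  -- Taylor estimate for each iterated derivative
  have htaylor : ∀ (k : ℕ), ∀ t ∈ Icc τ T, ∀ t' ∈ Icc τ T,
      |iteratedDerivWithin k y (Icc τ T) t' - iteratedDerivWithin k y (Icc τ T) t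
        - (t'-t) * iteratedDerivWithin (k+1) y (Icc τ T) t|
      ≤ (M * ((k+2).factorial:ℝ)^s / δ^(k+2)) * (t'-t)^2 := by
    intro k t ht t' ht'
    have hsub : Icc (min t t') (max t t') ⊆ Icc τ T :=
      Icc_subset_Icc (le_min ht.1 ht'.1) (max_le ht.2 ht'.2)
    have hKnn : 0 ≤ M * ((k+2).factorial:ℝ)^s / δ^(k+2) := by positivity
    have htm : t ∈ Icc (min t t') (max t t') := ⟨min_le_left _ _, le_max_left _ _⟩
    have ht'm : t' ∈ Icc (min t t') (max t t') := ⟨min_le_right _ _, le_max_right _ _⟩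
    have hdiam : ∀ u ∈ Icc (min t t') (max t t'), |u - t| ≤ |t' - t| := by
      intro u hu
      have h1 : max t t' - min t t' = |t' - t| := by
        rw [max_sub_min_eq_abs, abs_sub_comm]
      have h2 : |u - t| ≤ max t t' - min t t' :=
        abs_le.2 ⟨by cases' hu with hu1 hu2; cases' htm with htm1 htm2; linarith,
          by cases' hu with hu1 hu2; cases' htm with htm1 htm2; linarith⟩
      rwa [h1] at h2
    have inner : ∀ u ∈ Icc (min t t') (max t t'),
        ‖iteratedDerivWithin (k+1) y (Icc τ T) u - iteratedDerivWithin (k+1) y (Icc τ T) t‖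
          ≤ (M * ((k+2).factorial:ℝ)^s / δ^(k+2)) * |t' - t| := by
      intro u hu
      have h1 := Convex.norm_image_sub_le_of_norm_hasDerivWithin_le
        (f := iteratedDerivWithin (k+1) y (Icc τ T))
        (f' := fun v => iteratedDerivWithin (k+2) y (Icc τ T) v)
        (C := M * ((k+2).factorial:ℝ)^s / δ^(k+2))
        (fun v hv => (hderiv (k+1) v (hsub hv)).mono hsub)
        (fun v hv => by simpa [Real.norm_eq_abs] using hybound (k+2) v (hsub hv))
        (convex_Icc _ _) htm hu
      calc ‖iteratedDerivWithin (k+1) y (Icc τ T) u - iteratedDerivWithin (k+1) y (Icc τ T) t‖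
          ≤ (M * ((k+2).factorial:ℝ)^s / δ^(k+2)) * ‖u - t‖ := h1
        _ ≤ (M * ((k+2).factorial:ℝ)^s / δ^(k+2)) * |t' - t| := by
            apply mul_le_mul_of_nonneg_left _ hKnn
            rw [Real.norm_eq_abs]; exact hdiam u hu
    have houter := Convex.norm_image_sub_le_of_norm_hasDerivWithin_le
      (f := fun v => iteratedDerivWithin k y (Icc τ T) v
        - v * iteratedDerivWithin (k+1) y (Icc τ T) t)
      (f' := fun v => iteratedDerivWithin (k+1) y (Icc τ T) v
        - iteratedDerivWithin (k+1) y (Icc τ T) t)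
      (C := (M * ((k+2).factorial:ℝ)^s / δ^(k+2)) * |t' - t|)
      (fun v hv => by
        have h2 := ((hderiv k v (hsub hv)).mono hsub).sub
          ((hasDerivWithinAt_id v (Icc (min t t') (max t t'))).mul_const
            (iteratedDerivWithin (k+1) y (Icc τ T) t))
        simp only [id_eq, one_mul] at h2; exact h2)
      (fun v hv => inner v hv)
      (convex_Icc _ _) htm ht'm
    have heq : (iteratedDerivWithin k y (Icc τ T) t' - t' * iteratedDerivWithin (k+1) y (Icc τ T) t)
        - (iteratedDerivWithin k y (Icc τ T) t - t * iteratedDerivWithin (k+1) y (Icc τ T) t)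
        = iteratedDerivWithin k y (Icc τ T) t' - iteratedDerivWithin k y (Icc τ T) t
          - (t'-t) * iteratedDerivWithin (k+1) y (Icc τ T) t := by ring
    rw [heq] at houter
    calc |iteratedDerivWithin k y (Icc τ T) t' - iteratedDerivWithin k y (Icc τ T) t
        - (t'-t) * iteratedDerivWithin (k+1) y (Icc τ T) t|
        ≤ (M * ((k+2).factorial:ℝ)^s / δ^(k+2)) * |t' - t| * ‖t' - t‖ := houter
      _ = (M * ((k+2).factorial:ℝ)^s / δ^(k+2)) * (t'-t)^2 := by
          rw [Real.norm_eq_abs, mul_assoc, abs_mul_abs_self, sq]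
  -- quadratic estimate for S
  have hquad : ∀ (j : ℕ), ∀ t ∈ Icc τ T, ∀ t' ∈ Icc τ T,
      ‖S j t' - S j t - (t' - t) • S (j+1) t‖
        ≤ (C*M*((2:ℝ)^s/δ)^(j+2)*((j+2).factorial:ℝ)^s * Q) * (t'-t)^2 := by
    intro j t ht t' ht'
    have hd : ∀ i : ℕ,
        (iteratedDerivWithin (i+j) y (Icc τ T) t' • g i
          - iteratedDerivWithin (i+j) y (Icc τ T) t • g i)
          - (t'-t) • (iteratedDerivWithin (i+(j+1)) y (Icc τ T) t • g i)
        = (iteratedDerivWithin (i+j) y (Icc τ T) t' - iteratedDerivWithin (i+j) y (Icc τ T) t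
            - (t'-t) * iteratedDerivWithin (i+j+1) y (Icc τ T) t) • g i := by
      intro i
      rw [show i + (j+1) = i + j + 1 from (Nat.add_assoc i j 1).symm]
      module
    have H : HasSum (fun i =>
        (iteratedDerivWithin (i+j) y (Icc τ T) t' - iteratedDerivWithin (i+j) y (Icc τ T) t
          - (t'-t) * iteratedDerivWithin (i+j+1) y (Icc τ T) t) • g i)
        (S j t' - S j t - (t' - t) • S (j+1) t) := by
      have h1 := (hsum j t' ht').hasSum
      have h2 := (hsum j t ht).hasSum
      have h3 := ((hsum (j+1) t ht).hasSum).const_smul (t'-t)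
      have h4 := (h1.sub h2).sub h3
      simp only [hd] at h4
      exact h4
    have hper : ∀ i : ℕ,
        ‖(iteratedDerivWithin (i+j) y (Icc τ T) t' - iteratedDerivWithin (i+j) y (Icc τ T) t
          - (t'-t) * iteratedDerivWithin (i+j+1) y (Icc τ T) t) • g i‖
        ≤ (C*M*((2:ℝ)^s/δ)^(j+2)*((j+2).factorial:ℝ)^s * e i) * (t'-t)^2 := by
      intro i
      rw [norm_smul, Real.norm_eq_abs]
      have h5 := htaylor (i+j) t ht t' ht'
      have haux := aux_ineq s (2 - p.toReal⁻¹) C M δ R hs0 hC.le hM.le hδ hR i (j+2)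
      rw [← Nat.add_assoc] at haux
      calc |iteratedDerivWithin (i+j) y (Icc τ T) t' - iteratedDerivWithin (i+j) y (Icc τ T) t
          - (t'-t) * iteratedDerivWithin (i+j+1) y (Icc τ T) t| * ‖g i‖
          ≤ ((M * ((i+j+2).factorial:ℝ)^s / δ^(i+j+2)) * (t'-t)^2)
            * (C / (R^i * (Nat.factorial i:ℝ)^(2 - p.toReal⁻¹)))
            := mul_le_mul h5 (hg i) (norm_nonneg _) (by positivity)
        _ = ((M * ((i+j+2).factorial:ℝ)^s / δ^(i+j+2))
            * (C / (R^i * (Nat.factorial i:ℝ)^(2 - p.toReal⁻¹)))) * (t'-t)^2 := by ring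
        _ ≤ (C*M*((2:ℝ)^s/δ)^(j+2)*((j+2).factorial:ℝ)^s * e i) * (t'-t)^2 :=
            mul_le_mul_of_nonneg_right haux (sq_nonneg _)
    have hbsum : Summable (fun i =>
        (C*M*((2:ℝ)^s/δ)^(j+2)*((j+2).factorial:ℝ)^s * e i) * (t'-t)^2) :=
      (hesum.mul_left _).mul_right _
    have hnsum : Summable (fun i =>
        ‖(iteratedDerivWithin (i+j) y (Icc τ T) t' - iteratedDerivWithin (i+j) y (Icc τ T) t
          - (t'-t) * iteratedDerivWithin (i+j+1) y (Icc τ T) t) • g i‖) :=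
      Summable.of_nonneg_of_le (fun i => norm_nonneg _) hper hbsum
    calc ‖S j t' - S j t - (t' - t) • S (j+1) t‖
        = ‖∑' i, (iteratedDerivWithin (i+j) y (Icc τ T) t'
            - iteratedDerivWithin (i+j) y (Icc τ T) t
            - (t'-t) * iteratedDerivWithin (i+j+1) y (Icc τ T) t) • g i‖ := by rw [H.tsum_eq]
      _ ≤ ∑' i, ‖(iteratedDerivWithin (i+j) y (Icc τ T) t'
            - iteratedDerivWithin (i+j) y (Icc τ T) t
            - (t'-t) * iteratedDerivWithin (i+j+1) y (Icc τ T) t) • g i‖ :=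
          norm_tsum_le_tsum_norm hnsum
      _ ≤ ∑' i, (C*M*((2:ℝ)^s/δ)^(j+2)*((j+2).factorial:ℝ)^s * e i) * (t'-t)^2 :=
          Summable.tsum_le_tsum hper hnsum hbsum
      _ = (C*M*((2:ℝ)^s/δ)^(j+2)*((j+2).factorial:ℝ)^s * Q) * (t'-t)^2 := by
          rw [tsum_mul_right, tsum_mul_left]
  -- S j is differentiable with derivative S (j+1)
  have hHasDeriv : ∀ (j : ℕ), ∀ t ∈ Icc τ T,
      HasDerivWithinAt (S j) (S (j+1) t) (Icc τ T) t := by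
    intro j t ht
    rw [hasDerivWithinAt_iff_isLittleO, Asymptotics.isLittleO_iff]
    intro c hc
    have hKpos : 0 < C*M*((2:ℝ)^s/δ)^(j+2)*((j+2).factorial:ℝ)^s * Q := by
      have h1 : (0:ℝ) < ((j+2).factorial:ℝ)^s :=
        Real.rpow_pos_of_pos (by exact_mod_cast (j+2).factorial_pos) s
      have h2 : (0:ℝ) < ((2:ℝ)^s/δ)^(j+2) := pow_pos (div_pos hA hδ) _
      exact mul_pos (mul_pos (mul_pos (mul_pos hC hM) h2) h1) hQpos
    have h1 : ∀ᶠ t' in 𝓝[Icc τ T] t, t' ∈ Icc τ T := eventually_mem_nhdsWithin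
    have h2 : ∀ᶠ t' in 𝓝 t,
        |t' - t| < c / (C*M*((2:ℝ)^s/δ)^(j+2)*((j+2).factorial:ℝ)^s * Q) := by
      have hb : Metric.ball t (c / (C*M*((2:ℝ)^s/δ)^(j+2)*((j+2).factorial:ℝ)^s * Q)) ∈ 𝓝 t :=
        Metric.ball_mem_nhds t (div_pos hc hKpos)
      filter_upwards [hb] with x hx
      simpa [Real.dist_eq] using hx
    filter_upwards [h1, h2.filter_mono nhdsWithin_le_nhds] with t' hmem hlt
    have h3 := hquad j t ht t' hmem
    have h4 : (C*M*((2:ℝ)^s/δ)^(j+2)*((j+2).factorial:ℝ)^s * Q) * |t' - t| ≤ c := by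
      rw [mul_comm]
      exact (le_div_iff₀ hKpos).1 hlt.le
    calc ‖S j t' - S j t - (t' - t) • S (j+1) t‖
        ≤ (C*M*((2:ℝ)^s/δ)^(j+2)*((j+2).factorial:ℝ)^s * Q) * (t'-t)^2 := h3
      _ = ((C*M*((2:ℝ)^s/δ)^(j+2)*((j+2).factorial:ℝ)^s * Q) * |t'-t|) * |t'-t| := by
          rw [← sq_abs]; ring
      _ ≤ c * |t'-t| := mul_le_mul_of_nonneg_right h4 (abs_nonneg _)
      _ = c * ‖t'-t‖ := by rw [Real.norm_eq_abs]
  -- iterated derivatives of u coincide with S j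
  set u : ℝ → B := fun t : ℝ => ∑' i : ℕ, (iteratedDerivWithin i y (Icc τ T) t) • g i with hu
  have hu0 : u = S 0 := rfl
  have hIter : ∀ j : ℕ, EqOn (iteratedDerivWithin j u (Icc τ T)) (S j) (Icc τ T) := by
    intro j
    induction j with
    | zero => intro t ht; rw [iteratedDerivWithin_zero, hu0]
    | succ j ih =>
      intro t ht
      rw [iteratedDerivWithin_succ, derivWithin_congr ih (ih ht)]
      exact (hHasDeriv j t ht).derivWithin (hUD t ht)
  have hSbound : ∀ (j : ℕ), ∀ t ∈ Icc τ T,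
      ‖S j t‖ ≤ C * M * ((2:ℝ)^s/δ)^j * (Nat.factorial j : ℝ)^s * Q := by
    intro j t ht
    calc ‖S j t‖ ≤ ∑' i, ‖iteratedDerivWithin (i+j) y (Icc τ T) t • g i‖ :=
        norm_tsum_le_tsum_norm (hnormsum j t ht)
      _ ≤ ∑' i, C * M * ((2:ℝ)^s/δ)^j * (Nat.factorial j : ℝ)^s * e i :=
        Summable.tsum_le_tsum (fun i => hterm j i t ht) (hnormsum j t ht) (hesum.mul_left _)
      _ = C * M * ((2:ℝ)^s/δ)^j * (Nat.factorial j : ℝ)^s * Q := tsum_mul_left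
  refine ⟨?_, ?_, ?_, hesum, ?_⟩
  · intro t ht
    exact hnormsum 0 t ht
  · apply contDiffOn_of_differentiableOn_deriv
    intro m _
    intro x hx
    exact ((hHasDeriv m x hx).differentiableWithinAt).congr
      (fun y0 hy0 => hIter m hy0) (hIter m hx)
  · intro j t ht
    exact hIter j ht
  · intro j t ht
    have h := hSbound j t ht
    rw [hIter j ht]
    calc ‖S j t‖ ≤ C * M * ((2:ℝ)^s/δ)^j * (Nat.factorial j : ℝ)^s * Q := h
      _ = C * M * ((2:ℝ)^s/δ)^j * Q * (Nat.factorial j : ℝ)^s := by ring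
end
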